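/- In the ear setup, let K be a semifield and let f : diag(P) → K satisfy the T-path formula with respect to D. Then the restriction of f to diag(P₂) satisfies the T-path formula with respect to D₂. -/

import Mathlib

/-!
Common definitions: polygons with vertex set `ZMod n`, crossing of diagonals,
dissections, (weak) friezes with values in a semifield, and T-paths.
-/

/-- A *semifield* in the sense of the paper: a set `K` with a commutative, associative
addition and a multiplication making `K` a commutative group, such that multiplication
distributes over addition.  (There is no zero and no subtraction.) -/
class PaperSemifield (K : Type*) extends CommGroup K, AddCommSemigroup K where
  mul_add' : ∀ a b c : K, a * (b + c) = a * b + a * c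

/-- Position of the vertex `x` of the `n`-gon relative to the vertex `a`, going around
the polygon in the positive direction; `relPos n a x = 0` iff `x = a`. -/
def relPos (n : ℕ) (a x : ZMod n) : ℕ := (x - a).val

/-- The vertices `a, b, c, d` of the `n`-gon appear strictly in this cyclic order. -/
def CyclicallyOrdered (n : ℕ) (a b c d : ZMod n) : Prop :=
  0 < relPos n a b ∧ relPos n a b < relPos n a c ∧ relPos n a c < relPos n a d

/-- The diagonals `{a,b}` and `{c,d}` of the `n`-gon *cross*: the four vertices are
distinct and appear in the cyclic order `a, c, b, d` or `a, d, b, c`. -/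
def Crosses (n : ℕ) (a b c d : ZMod n) : Prop :=
  CyclicallyOrdered n a c b d ∨ CyclicallyOrdered n a d b c

/-- `{a, b}` is an edge of the `n`-gon, i.e. joins neighbouring vertices. -/
def IsEdge (n : ℕ) (a b : ZMod n) : Prop := b = a + 1 ∨ a = b + 1

/-- `{a, b}` is an internal diagonal of the `n`-gon. -/
def IsInternalDiag (n : ℕ) (a b : ZMod n) : Prop := a ≠ b ∧ ¬ IsEdge n a b

/-- `w'` is the successor of `w` in the induced cyclic order of the subpolygon of the
`n`-gon with vertex set `W`. -/
def NextIn (n : ℕ) (W : Set (ZMod n)) (w w' : ZMod n) : Prop :=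
  w ∈ W ∧ w' ∈ W ∧ w' ≠ w ∧ ∀ u ∈ W, relPos n w u = 0 ∨ relPos n w w' ≤ relPos n w u

/-- `D` is a dissection of the subpolygon of the `n`-gon with vertex set `W`: a set of
pairwise non-crossing diagonals of the subpolygon joining non-neighbouring vertices. -/
def IsDissectionOf (n : ℕ) (W : Set (ZMod n)) (D : Set (Sym2 (ZMod n))) : Prop :=
  (∀ a b, s(a, b) ∈ D → a ∈ W ∧ b ∈ W ∧ a ≠ b ∧ ¬ NextIn n W a b ∧ ¬ NextIn n W b a) ∧
  (∀ a b c d, s(a, b) ∈ D → s(c, d) ∈ D → ¬ Crosses n a b c d)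

/-- `D` is a dissection of the `n`-gon. -/
def IsDissection (n : ℕ) (D : Set (Sym2 (ZMod n))) : Prop :=
  IsDissectionOf n Set.univ D

/-- `f` is symmetric on pairs of vertices from `W`, i.e. represents a map defined on
unordered diagonals of the subpolygon with vertex set `W`. -/
def SymmOn (n : ℕ) {K : Type*} (W : Set (ZMod n)) (f : ZMod n → ZMod n → K) : Prop :=
  ∀ a b, a ∈ W → b ∈ W → f a b = f b a

/-- The Ptolemy relation for `f` at the crossing diagonals `{a,b}` and `{c,d}`. -/
def PtolemyRel {n : ℕ} {K : Type*} [Mul K] [Add K]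
    (f : ZMod n → ZMod n → K) (a b c d : ZMod n) : Prop :=
  f a b * f c d = f a c * f b d + f a d * f b c

/-- `f` is a weak frieze on the subpolygon with vertex set `W` with respect to `D`:
the Ptolemy relation holds whenever `{a,b}` and `{c,d}` are crossing diagonals of the
subpolygon with `{c,d} ∈ D`. -/
def IsWeakFriezeOn (n : ℕ) {K : Type*} [Mul K] [Add K] (W : Set (ZMod n))
    (D : Set (Sym2 (ZMod n))) (f : ZMod n → ZMod n → K) : Prop :=
  ∀ a b c d : ZMod n, a ∈ W → b ∈ W → c ∈ W → d ∈ W →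
    Crosses n a b c d → s(c, d) ∈ D → PtolemyRel f a b c d

/-- `f` is a weak frieze on the `n`-gon with respect to the dissection `D`. -/
def IsWeakFrieze (n : ℕ) {K : Type*} [Mul K] [Add K]
    (D : Set (Sym2 (ZMod n))) (f : ZMod n → ZMod n → K) : Prop :=
  IsWeakFriezeOn n Set.univ D f

/-- `f` is a frieze on the subpolygon with vertex set `W`: the Ptolemy relation holds
for all crossing diagonals of the subpolygon. -/
def IsFriezeOn (n : ℕ) {K : Type*} [Mul K] [Add K] (W : Set (ZMod n))
    (f : ZMod n → ZMod n → K) : Prop :=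
  ∀ a b c d : ZMod n, a ∈ W → b ∈ W → c ∈ W → d ∈ W →
    Crosses n a b c d → PtolemyRel f a b c d

/-- `f` is a frieze on the `n`-gon. -/
def IsFrieze (n : ℕ) {K : Type*} [Mul K] [Add K] (f : ZMod n → ZMod n → K) : Prop :=
  IsFriezeOn n Set.univ f

/-- The vertices of the `n`-gon realised as a regular convex `n`-gon in the Euclidean
plane. -/
noncomputable def vtx (n : ℕ) (a : ZMod n) : ℝ × ℝ :=
  (Real.cos (2 * Real.pi * (a.val : ℝ) / n), Real.sin (2 * Real.pi * (a.val : ℝ) / n))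

/-- The point with parameter `t` on the segment from `A` to `B`. -/
def segPt (A B : ℝ × ℝ) (t : ℝ) : ℝ × ℝ :=
  ((1 - t) * A.1 + t * B.1, (1 - t) * A.2 + t * B.2)

/-- In the regular realisation of the `n`-gon, the diagonal `{c,d}` crosses the diagonal
`{a,b}` at the interior point with parameter `t` along the segment from `a` to `b`. -/
def CrossesAt (n : ℕ) (a b c d : ZMod n) (t : ℝ) : Prop :=
  0 < t ∧ t < 1 ∧ ∃ s : ℝ, 0 < s ∧ s < 1 ∧
    segPt (vtx n a) (vtx n b) t = segPt (vtx n c) (vtx n d) s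

/-- `l` is a T-path from `a` to `b` with respect to `D` in the subpolygon of the `n`-gon
with vertex set `W`.  Writing `p = l.length` and `π_i = l.getD (i-1) 0` (so the paper's
`π_1, …, π_p` are the entries of `l`), the conditions are: the path starts at `a` and
ends at `b`, uses vertices of `W`; (i) the consecutive pairs are pairwise different
diagonals; (ii) no step crosses a diagonal in `D`; (iii) the steps starting at an
even position (in the paper's 1-based numbering) are diagonals in `D` which cross the
diagonal `{a,b}` at pairwise different points progressing monotonically in the
direction from `a` to `b`. -/
def IsTPathOn (n : ℕ) (W : Set (ZMod n)) (D : Set (Sym2 (ZMod n))) (a b : ZMod n)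
    (l : List (ZMod n)) : Prop :=
  2 ≤ l.length ∧
  l.getD 0 0 = a ∧
  l.getD (l.length - 1) 0 = b ∧
  (∀ i, i < l.length → l.getD i 0 ∈ W) ∧
  (∀ i, i + 1 < l.length → l.getD i 0 ≠ l.getD (i + 1) 0) ∧
  (∀ i j, i < j → j + 1 < l.length →
    s(l.getD i 0, l.getD (i + 1) 0) ≠ s(l.getD j 0, l.getD (j + 1) 0)) ∧
  (∀ i, i + 1 < l.length → ∀ c d, s(c, d) ∈ D →
    ¬ Crosses n (l.getD i 0) (l.getD (i + 1) 0) c d) ∧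
  (∀ i, Odd i → i + 1 < l.length → s(l.getD i 0, l.getD (i + 1) 0) ∈ D) ∧
  (∃ t : ℕ → ℝ,
    (∀ i, Odd i → i + 1 < l.length → CrossesAt n a b (l.getD i 0) (l.getD (i + 1) 0) (t i)) ∧
    (∀ i j, Odd i → Odd j → i < j → j + 1 < l.length → t i < t j))

/-- `l` is a T-path from `a` to `b` with respect to `D` in the `n`-gon. -/
def IsTPath (n : ℕ) (D : Set (Sym2 (ZMod n))) (a b : ZMod n) (l : List (ZMod n)) : Prop :=
  IsTPathOn n Set.univ D a b l

open Classical in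
/-- The (finite) set of all T-paths from `a` to `b` with respect to `D` in the
subpolygon with vertex set `W`.  (Any T-path has pairwise different steps, hence has
length at most `n * n + 1`, so this finite set contains all of them.) -/
noncomputable def TPathFinsetOn (n : ℕ) [NeZero n] (W : Set (ZMod n))
    (D : Set (Sym2 (ZMod n))) (a b : ZMod n) : Finset (List (ZMod n)) :=
  ((Finset.range (n * n + 2)).biUnion fun k =>
    (Finset.univ : Finset (Fin k → ZMod n)).image List.ofFn).filter (IsTPathOn n W D a b)

/-- The (finite) set of all T-paths from `a` to `b` with respect to `D` in the `n`-gon. -/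
noncomputable def TPathFinset (n : ℕ) [NeZero n] (D : Set (Sym2 (ZMod n))) (a b : ZMod n) :
    Finset (List (ZMod n)) :=
  TPathFinsetOn n Set.univ D a b

/-- The weight `f(π)` of a T-path `l`: the product of the values of `f` on the steps at
odd positions (1-based) divided by the product of the values on the steps at even
positions. -/
def pathWeight (n : ℕ) {K : Type*} [CommGroup K] (f : ZMod n → ZMod n → K)
    (l : List (ZMod n)) : K :=
  (∏ i ∈ (Finset.range (l.length - 1)).filter (fun i => Even i),
      f (l.getD i 0) (l.getD (i + 1) 0)) /
  (∏ i ∈ (Finset.range (l.length - 1)).filter (fun i => Odd i),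
      f (l.getD i 0) (l.getD (i + 1) 0))

/-- `f` satisfies the T-path formula with respect to `D` on the subpolygon with vertex
set `W`: for all vertices `a ≠ b` of the subpolygon, `f a b` is the sum of the weights
of all T-paths from `a` to `b`.  Since the semifield `K` has no zero element, the sum is
computed in `WithZero K` (the sum is in fact always a sum of a nonempty collection). -/
def SatisfiesTPathFormulaOn (n : ℕ) [NeZero n] {K : Type*} [PaperSemifield K]
    (W : Set (ZMod n)) (D : Set (Sym2 (ZMod n))) (f : ZMod n → ZMod n → K) : Prop :=
  ∀ a b : ZMod n, a ∈ W → b ∈ W → a ≠ b →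
    WithZero.coe (f a b) = ∑ l ∈ TPathFinsetOn n W D a b, WithZero.coe (pathWeight n f l)

/-- `f` satisfies the T-path formula with respect to `D` on the `n`-gon. -/
def SatisfiesTPathFormula (n : ℕ) [NeZero n] {K : Type*} [PaperSemifield K]
    (D : Set (Sym2 (ZMod n))) (f : ZMod n → ZMod n → K) : Prop :=
  SatisfiesTPathFormulaOn n Set.univ D f

/-- `W` is the vertex set of one of the subpolygons into which the pairwise non-crossing
internal diagonals `E` divide the `n`-gon: `W` has at least three vertices, consecutive
vertices of `W` are joined by an edge of the polygon or by a diagonal in `E`, and no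
diagonal in `E` cuts through `W`. -/
def IsCell (n : ℕ) (E : Set (Sym2 (ZMod n))) (W : Set (ZMod n)) : Prop :=
  3 ≤ W.ncard ∧
  (∀ w w', NextIn n W w w' → (w' = w + 1 ∨ s(w, w') ∈ E)) ∧
  (∀ c d, s(c, d) ∈ E → c ∈ W → d ∈ W → (NextIn n W c d ∨ NextIn n W d c))

/-! A T-path from `a` to `b` in `P₂` with respect to `D₂` is the same thing as a T-path in `P`
with respect to `D`, so the two T-path sums for `f a b` coincide. One inclusion holds because
no diagonal of `P₂` crosses `{ζ, η}`. Conversely, each `D`-step of a T-path in `P` meets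
`{a, b}` at an interior point; in the regular realisation of the polygon (where the sign of the
orientation of three vertices is read off their cyclic order) this forces the step to cross
`{a, b}` or to equal it. For the step `{ζ, η}` both are impossible, so every `D`-step lies in
`D₂`, and every vertex of the path, being `a`, `b` or an endpoint of a `D`-step, lies in
`P₂`. -/

open Real

section Polygon

variable {n : ℕ}

def arc (n : ℕ) (a b : ZMod n) : Set (ZMod n) := {x | relPos n a x ≤ relPos n a b}

lemma relPos_eq_zero_iff {a x : ZMod n} : relPos n a x = 0 ↔ x = a := by
  rw [relPos, ZMod.val_eq_zero, sub_eq_zero]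

variable [NeZero n]

lemma relPos_lt (a x : ZMod n) : relPos n a x < n := ZMod.val_lt _

lemma relPos_injective (a : ZMod n) : Function.Injective (relPos n a) := fun _ _ h =>
  sub_left_injective (ZMod.val_injective n h)

lemma relPos_spec (x y : ZMod n) :
    relPos n x y < n ∧ (relPos n x y + x.val = y.val ∨ relPos n x y + x.val = y.val + n) := by
  have hr := relPos_lt x y
  have hx := x.val_lt
  refine ⟨hr, ?_⟩
  have hy : y.val = (relPos n x y + x.val) % n := by rw [relPos, ← ZMod.val_add, sub_add_cancel]
  rcases lt_or_ge (relPos n x y + x.val) n with hlt | hge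
  · left
    rw [hy, Nat.mod_eq_of_lt hlt]
  · right
    rw [hy, Nat.mod_eq_sub_mod hge, Nat.mod_eq_of_lt (by omega)]
    omega

lemma Crosses.symm {a b c d : ZMod n} (h : Crosses n a b c d) : Crosses n c d a b := by
  have h₁ := relPos_spec a b; have h₂ := relPos_spec a c; have h₃ := relPos_spec a d
  have h₄ := relPos_spec c a; have h₅ := relPos_spec c b; have h₆ := relPos_spec c d
  have := a.val_lt; have := b.val_lt; have := c.val_lt; have := d.val_lt
  unfold Crosses CyclicallyOrdered at *
  omega

lemma not_crosses_of_mem_arc {ζ η x y c d : ZMod n}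
    (hx : x ∈ arc n η ζ) (hy : y ∈ arc n η ζ) (hcd : s(c, d) = s(ζ, η)) :
    ¬ Crosses n x y c d := by
  have key : ¬ Crosses n x y ζ η ∧ ¬ Crosses n x y η ζ := by
    have h₁ := relPos_spec η x; have h₂ := relPos_spec η y; have h₃ := relPos_spec η ζ
    have h₄ := relPos_spec x ζ; have h₅ := relPos_spec x y; have h₆ := relPos_spec x η
    have := x.val_lt; have := y.val_lt; have := ζ.val_lt; have := η.val_lt
    simp only [arc, Set.mem_ofPred_eq] at hx hy
    unfold Crosses CyclicallyOrdered
    omega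
  obtain ⟨rfl, rfl⟩ | ⟨rfl, rfl⟩ := Sym2.eq_iff.mp hcd
  exacts [key.1, key.2]

end Polygon

section Realisation

def orient (A B C : ℝ × ℝ) : ℝ := (B.1 - A.1) * (C.2 - A.2) - (B.2 - A.2) * (C.1 - A.1)

lemma orient_segPt (A B C D : ℝ × ℝ) (s : ℝ) :
    orient A B (segPt C D s) = (1 - s) * orient A B C + s * orient A B D := by
  simp only [orient, segPt]; ring

lemma orient_segPt_self (A B : ℝ × ℝ) (t : ℝ) : orient A B (segPt A B t) = 0 := by
  simp only [orient, segPt]; ring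

lemma orient_circle (α s r : ℝ) :
    orient (cos α, sin α) (cos (α + 2 * s), sin (α + 2 * s))
      (cos (α + 2 * r), sin (α + 2 * r)) = 4 * sin s * sin (r - s) * sin r := by
  have h₁ : sin (2 * r - 2 * s)
      = sin (α + 2 * r) * cos (α + 2 * s) - cos (α + 2 * r) * sin (α + 2 * s) := by
    rw [← sin_sub]; ring_nf
  have h₂ : sin (2 * s) = sin (α + 2 * s) * cos α - cos (α + 2 * s) * sin α := by
    rw [← sin_sub]; ring_nf
  have h₃ : sin (2 * r) = sin (α + 2 * r) * cos α - cos (α + 2 * r) * sin α := by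
    rw [← sin_sub]; ring_nf
  have key :
      sin (2 * r - 2 * s) + sin (2 * s) - sin (2 * r) = 4 * sin s * sin (r - s) * sin r := by
    rw [sin_sub (2 * r) (2 * s), sin_two_mul, sin_two_mul, cos_two_mul, cos_two_mul, sin_sub]
    linear_combination (4 * sin r * cos r) * sin_sq_add_cos_sq s
      - (4 * sin s * cos s) * sin_sq_add_cos_sq r
  simp only [orient]
  linear_combination -h₁ - h₂ + h₃ + key

lemma sin_pi_mul_div_pos {n x : ℝ} (h₀ : 0 < x) (h₁ : x < n) : 0 < sin (π * x / n) := by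
  have hn : 0 < n := h₀.trans h₁
  refine sin_pos_of_pos_of_lt_pi (by positivity) ?_
  rw [div_lt_iff₀ hn]
  nlinarith [pi_pos]

variable {n : ℕ} [NeZero n]

lemma vtx_eq_rotate (a b : ZMod n) :
    vtx n b = (cos (2 * π * a.val / n + 2 * (π * relPos n a b / n)),
      sin (2 * π * a.val / n + 2 * (π * relPos n a b / n))) := by
  have hn : (n : ℝ) ≠ 0 := NeZero.ne _
  rcases (relPos_spec a b).2 with h | h
  · have : 2 * π * a.val / n + 2 * (π * relPos n a b / n) = 2 * π * b.val / n := by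
      rw [← h]; push_cast; field_simp; ring
    rw [this, vtx]
  · have : 2 * π * a.val / n + 2 * (π * relPos n a b / n) = 2 * π * b.val / n + 2 * π := by
      have h' : (relPos n a b : ℝ) = b.val + n - a.val := by
        rw [eq_sub_iff_add_eq]; exact_mod_cast h
      rw [h']; field_simp; ring
    rw [this, cos_add_two_pi, sin_add_two_pi, vtx]

lemma orient_vtx (a b c : ZMod n) :
    orient (vtx n a) (vtx n b) (vtx n c) = 4 * sin (π * relPos n a b / n)
      * sin (π * ((relPos n a c : ℝ) - relPos n a b) / n) * sin (π * relPos n a c / n) := by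
  rw [vtx_eq_rotate a b, vtx_eq_rotate a c, vtx, orient_circle]
  ring_nf

lemma orient_vtx_trichotomy {a b : ZMod n} (hab : a ≠ b) (x : ZMod n) :
    ((x = a ∨ x = b) ∧ orient (vtx n a) (vtx n b) (vtx n x) = 0) ∨
    (0 < relPos n a x ∧ relPos n a x < relPos n a b ∧
      orient (vtx n a) (vtx n b) (vtx n x) < 0) ∨
    (relPos n a b < relPos n a x ∧ 0 < orient (vtx n a) (vtx n b) (vtx n x)) := by
  by_cases hx : x = a ∨ x = b
  · refine Or.inl ⟨hx, ?_⟩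
    rcases hx with rfl | rfl <;> simp only [orient] <;> ring
  obtain ⟨hxa, hxb⟩ := not_or.mp hx
  set u := relPos n a b
  set v := relPos n a x
  have hu : 0 < u := Nat.pos_of_ne_zero (mt relPos_eq_zero_iff.mp hab.symm)
  have hv : 0 < v := Nat.pos_of_ne_zero (mt relPos_eq_zero_iff.mp hxa)
  have hun : (u : ℝ) < n := by exact_mod_cast relPos_lt a b
  have hvn : (v : ℝ) < n := by exact_mod_cast relPos_lt a x
  have hsu := sin_pi_mul_div_pos (by exact_mod_cast hu) hun
  have hsv := sin_pi_mul_div_pos (by exact_mod_cast hv) hvn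
  rw [orient_vtx]
  rcases lt_or_gt_of_ne (fun h => hxb (relPos_injective a h) : v ≠ u) with hvu | huv
  · have hneg : sin (π * ((v : ℝ) - u) / n) < 0 := by
      rw [show π * ((v : ℝ) - u) / n = -(π * ((u : ℝ) - v) / n) by ring, sin_neg, neg_lt_zero]
      exact sin_pi_mul_div_pos (sub_pos.mpr (by exact_mod_cast hvu)) (by linarith)
    exact Or.inr (Or.inl ⟨hv, hvu, mul_neg_of_neg_of_pos
      (mul_neg_of_pos_of_neg (mul_pos four_pos hsu) hneg) hsv⟩)
  · have hpos : 0 < sin (π * ((v : ℝ) - u) / n) :=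
      sin_pi_mul_div_pos (sub_pos.mpr (by exact_mod_cast huv)) (by linarith)
    exact Or.inr (Or.inr ⟨huv, by positivity⟩)

lemma crosses_or_eq_of_crossesAt {a b c d : ZMod n} {t : ℝ} (hab : a ≠ b) (hcd : c ≠ d)
    (h : CrossesAt n a b c d t) : Crosses n a b c d ∨ s(a, b) = s(c, d) := by
  obtain ⟨-, -, s, hs₀, hs₁, hP⟩ := h
  have key : (1 - s) * orient (vtx n a) (vtx n b) (vtx n c)
      + s * orient (vtx n a) (vtx n b) (vtx n d) = 0 := by
    rw [← orient_segPt, ← hP, orient_segPt_self]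
  rcases orient_vtx_trichotomy hab c with ⟨hc, hOc⟩ | ⟨hc₀, hcu, hOc⟩ | ⟨hcu, hOc⟩ <;>
    rcases orient_vtx_trichotomy hab d with ⟨hd, hOd⟩ | ⟨hd₀, hdu, hOd⟩ | ⟨hdu, hOd⟩
  · right
    rcases hc with rfl | rfl <;> rcases hd with rfl | rfl <;> simp_all [Sym2.eq_swap]
  all_goals first
    | exact Or.inl (Or.inl ⟨hc₀, hcu, hdu⟩)
    | exact Or.inl (Or.inr ⟨hd₀, hdu, hcu⟩)
    | (exfalso; nlinarith [mul_pos hs₀ (sub_pos.mpr hs₁)])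

end Realisation

lemma getD_mem_of_odd_steps {α : Type*} {l : List α} {S : Set α} {x : α}
    (hfirst : l.getD 0 x ∈ S) (hlast : l.getD (l.length - 1) x ∈ S)
    (hodd : ∀ i, Odd i → i + 1 < l.length → l.getD i x ∈ S ∧ l.getD (i + 1) x ∈ S)
    {i : ℕ} (hi : i < l.length) : l.getD i x ∈ S := by
  rcases i.even_or_odd with ⟨k, rfl⟩ | hodd_i
  · rcases k.eq_zero_or_pos with rfl | hk
    · exact hfirst
    have := (hodd (k + k - 1) ⟨k - 1, by omega⟩ (by omega)).2
    rwa [show k + k - 1 + 1 = k + k by omega] at this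
  · by_cases hil : i + 1 < l.length
    · exact (hodd i hodd_i hil).1
    · rwa [show i = l.length - 1 by omega]

section TPaths

variable {n : ℕ} [NeZero n] {W : Set (ZMod n)} {D : Set (Sym2 (ZMod n))} {a b : ZMod n}
  {l : List (ZMod n)}

/-- If a `D`-step were `{a, b}`, the first `D`-step, which meets `{a, b}` in its interior and
may not cross it, would be `{a, b}` as well: a repeated step, or, if the two coincide, a
repetition of the step before it. -/
lemma IsTPathOn.odd_step_ne (hl : IsTPathOn n W D a b l) (hab : a ≠ b) {i : ℕ} (hi : Odd i)
    (hil : i + 1 < l.length) : s(l.getD i 0, l.getD (i + 1) 0) ≠ s(a, b) := by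
  obtain ⟨-, hstart, -, -, hne, hdistinct, hnc, hD, t, hcross, -⟩ := hl
  intro hstep
  have h₁ : 1 + 1 < l.length := by have := hi.pos; omega
  rcases crosses_or_eq_of_crossesAt hab (hne 1 h₁) (hcross 1 odd_one h₁) with hc | h1ab
  · exact hnc 1 h₁ a b (hstep ▸ hD i hi hil) hc.symm
  obtain hlt | rfl : 1 < i ∨ i = 1 := by have := hi.pos; omega
  · exact hdistinct 1 i hlt hil (h1ab.symm.trans hstep.symm)
  rcases Sym2.eq_iff.mp h1ab with ⟨ha, -⟩ | ⟨ha, hb⟩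
  · exact hne 0 (by omega) (hstart.trans ha)
  · apply hdistinct 0 1 one_pos h₁
    rw [hstart, ← hb, ha]
    exact Sym2.eq_swap

lemma isTPathOn_arc_iff {ζ η : ZMod n} {D₂ : Set (Sym2 (ZMod n))}
    (hD₂ : ∀ c d, s(c, d) ∈ D₂ → c ∈ arc n η ζ ∧ d ∈ arc n η ζ)
    (ha : a ∈ arc n η ζ) (hb : b ∈ arc n η ζ) (hab : a ≠ b) :
    IsTPathOn n (arc n η ζ) D₂ a b l ↔ IsTPath n (insert s(ζ, η) D₂) a b l := by
  constructor
  · rintro ⟨hlen, hstart, hend, hmem, hne, hdistinct, hnc, hD, hcross⟩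
    refine ⟨hlen, hstart, hend, fun _ _ => trivial, hne, hdistinct, ?_,
      fun i hi hil => Or.inr (hD i hi hil), hcross⟩
    rintro i hil c d (hcd | hcd)
    · exact not_crosses_of_mem_arc (hmem i (by omega)) (hmem (i + 1) hil) hcd
    · exact hnc i hil c d hcd
  · intro hl
    have ⟨hlen, hstart, hend, _, hne, hdistinct, hnc, hD, t, hcross, hmono⟩ := hl
    have hodd : ∀ i, Odd i → i + 1 < l.length → s(l.getD i 0, l.getD (i + 1) 0) ∈ D₂ := by
      intro i hi hil
      refine (hD i hi hil).resolve_left fun hζη => ?_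
      rcases crosses_or_eq_of_crossesAt hab (hne i hil) (hcross i hi hil) with hc | heq
      · exact not_crosses_of_mem_arc ha hb hζη hc
      · exact hl.odd_step_ne hab hi hil heq.symm
    refine ⟨hlen, hstart, hend, fun i hi => ?_, hne, hdistinct,
      fun i hil c d hcd => hnc i hil c d (Or.inr hcd), hodd, t, hcross, hmono⟩
    exact getD_mem_of_odd_steps (hstart ▸ ha) (hend ▸ hb)
      (fun i hi hil => hD₂ _ _ (hodd i hi hil)) hi

end TPaths

theorem ear_tPathFormula_restrict_general
    (n : ℕ) [NeZero n] {K : Type*} [PaperSemifield K]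
    (ζ η : ZMod n)
    (D D₂ : Set (Sym2 (ZMod n)))
    (hsplit : D = insert s(ζ, η) D₂)
    (hD₂ : IsDissectionOf n {ε : ZMod n | relPos n η ε ≤ relPos n η ζ} D₂)
    (f : ZMod n → ZMod n → K)
    (hT : SatisfiesTPathFormula n D f) :
    SatisfiesTPathFormulaOn n {ε : ZMod n | relPos n η ε ≤ relPos n η ζ} D₂ f := by
  classical
  subst hsplit
  intro a b ha hb hab
  have hends : ∀ c d, s(c, d) ∈ D₂ → c ∈ arc n η ζ ∧ d ∈ arc n η ζ := fun c d h =>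
    ⟨(hD₂.1 c d h).1, (hD₂.1 c d h).2.1⟩
  convert hT a b trivial trivial hab using 2
  exact Finset.filter_congr fun l _ => isTPathOn_arc_iff hends ha hb hab

/-- **Ear setup.**  `D = {d} ⊔ D₂` is a dissection of the `n`-gon, where `d = {ζ,η}`
divides the polygon into subpolygons `P₁` (vertex set `V₁ = {ε : ζ ≤ ε ≤ η}`, an ear)
and `P₂` (vertex set `V₂ = {ε : η ≤ ε ≤ ζ}`), and `D₂` is a dissection of `P₂`.
If `f : diag(P) → K` satisfies the T-path formula with respect to `D`, then its
restriction to `diag(P₂)` satisfies the T-path formula with respect to `D₂`. -/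
theorem ear_tPathFormula_restrict
    (n : ℕ) [NeZero n] (hn : 3 ≤ n) {K : Type*} [PaperSemifield K]
    (ζ η : ZMod n) (hζη : IsInternalDiag n ζ η)
    (D D₂ : Set (Sym2 (ZMod n)))
    (hD : IsDissection n D)
    (hsplit : D = insert s(ζ, η) D₂) (hdm : s(ζ, η) ∉ D₂)
    (hD₂ : IsDissectionOf n {ε : ZMod n | relPos n η ε ≤ relPos n η ζ} D₂)
    (f : ZMod n → ZMod n → K) (hf : SymmOn n Set.univ f)
    (hT : SatisfiesTPathFormula n D f) :
    SatisfiesTPathFormulaOn n {ε : ZMod n | relPos n η ε ≤ relPos n η ζ} D₂ f :=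
  ear_tPathFormula_restrict_general n ζ η D D₂ hsplit hD₂ f hT
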